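/- arXiv:2502.07150 — 10 statements merged into one kernel-verified Lean document; each statement's English description precedes it below -/
import Mathlib

section
/- For every r ≥ 2, every r × r matrix M over the field with two elements can be written as the sum of at most two invertible r × r matrices over F₂. -/
/-!
Gaussian elimination by transvections writes `M = P * diagonal d * Q` with `P`, `Q` invertible,
so only diagonal matrices matter. If some `d k = 0`, then for the permutation matrix `P_σ` of a
full cycle `σ` both `P_σ` and `diagonal d - P_σ` are invertible: a kernel vector `x` satisfies
`x (σ i) = d i * x i`, so it vanishes along the whole orbit of `σ k`. Otherwise `diagonal d` is
invertible and it suffices to split the identity. In `R[X]/(X ^ r - X - 1)` the root `α` is a unit,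
since `α * (α ^ (r - 1) - 1) = 1`, hence so is `α + 1 = α ^ r`, and `1 = (α + 1) + (-α)`;
the left regular representation on the power basis carries this to `r × r` matrices.
-/

open Matrix Polynomial

def IsSumOfTwoUnits {R : Type*} [Semiring R] (a : R) : Prop :=
  ∃ u v : R, IsUnit u ∧ IsUnit v ∧ a = u + v

namespace IsSumOfTwoUnits

variable {R S : Type*} [Semiring R] [Semiring S]

theorem mul_mul {a : R} (h : IsSumOfTwoUnits a) {p q : R} (hp : IsUnit p) (hq : IsUnit q) :
    IsSumOfTwoUnits (p * a * q) := by
  obtain ⟨u, v, hu, hv, rfl⟩ := h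
  exact ⟨p * u * q, p * v * q, (hp.mul hu).mul hq, (hp.mul hv).mul hq, by rw [mul_add, add_mul]⟩

theorem of_isUnit (h : IsSumOfTwoUnits (1 : R)) {u : R} (hu : IsUnit u) : IsSumOfTwoUnits u := by
  simpa using h.mul_mul hu isUnit_one

theorem map {F : Type*} [FunLike F R S] [RingHomClass F R S] (f : F) {a : R}
    (h : IsSumOfTwoUnits a) : IsSumOfTwoUnits (f a) := by
  obtain ⟨u, v, hu, hv, rfl⟩ := h
  exact ⟨f u, f v, hu.map f, hv.map f, map_add f u v⟩

end IsSumOfTwoUnits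

section AdjoinRoot

variable {R : Type*} [CommRing R] {r : ℕ}

theorem Polynomial.monic_X_pow_sub_X_add_one (hr : 2 ≤ r) : (X ^ r - (X + 1) : R[X]).Monic :=
  monic_X_pow_sub <| (degree_add_le _ _).trans_lt <| by
    refine max_lt (degree_X_le.trans_lt ?_) (degree_one_le.trans_lt ?_) <;>
      exact_mod_cast (by omega)

theorem Polynomial.natDegree_X_pow_sub_X_add_one [Nontrivial R] (hr : 2 ≤ r) :
    (X ^ r - (X + 1) : R[X]).natDegree = r := by
  have : (X + 1 : R[X]).natDegree < r :=
    (natDegree_add_le _ _).trans_lt (by simp; omega)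
  rw [natDegree_sub_eq_left_of_natDegree_lt] <;> simp [this]

theorem AdjoinRoot.isSumOfTwoUnits_one (hr : 1 ≤ r) :
    IsSumOfTwoUnits (1 : AdjoinRoot (X ^ r - (X + 1) : R[X])) := by
  set α := AdjoinRoot.root (X ^ r - (X + 1) : R[X])
  have hα : α ^ r = α + 1 := by
    have := AdjoinRoot.eval₂_root (X ^ r - (X + 1) : R[X])
    rwa [eval₂_sub, eval₂_pow, eval₂_add, eval₂_X, eval₂_one, sub_eq_zero] at this
  have hαu : IsUnit α := by
    refine IsUnit.of_mul_eq_one (α ^ (r - 1) - 1) ?_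
    rw [mul_sub, ← pow_succ', Nat.sub_add_cancel hr, hα]
    ring
  refine ⟨α + 1, -α, hα ▸ hαu.pow r, hαu.neg, by ring⟩

theorem Matrix.isSumOfTwoUnits_one [Nontrivial R] (hr : 2 ≤ r) :
    IsSumOfTwoUnits (1 : Matrix (Fin r) (Fin r) R) := by
  let pb := AdjoinRoot.powerBasis' (monic_X_pow_sub_X_add_one (R := R) hr)
  let b := pb.basis.reindex
    (finCongr (by rw [AdjoinRoot.powerBasis'_dim, natDegree_X_pow_sub_X_add_one hr]))
  simpa using (AdjoinRoot.isSumOfTwoUnits_one (R := R) (by omega)).map (Algebra.leftMulMatrix b)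

end AdjoinRoot

namespace Matrix

variable {n K : Type*} [Fintype n] [DecidableEq n] [Field K]

theorem isUnit_permMatrix {R : Type*} [CommRing R] (σ : Equiv.Perm n) :
    IsUnit (σ.permMatrix R) := by
  rw [isUnit_iff_isUnit_det, det_permutation]
  exact (Equiv.Perm.sign σ).isUnit.map (Int.castRingHom R)

theorem isUnit_diagonal_sub_permMatrix {σ : Equiv.Perm n} (hσ : σ.IsCycle)
    (hσ_supp : ∀ i, σ i ≠ i) {d : n → K} {k : n} (hk : d k = 0) :
    IsUnit (diagonal d - σ.permMatrix K) := by
  rw [← mulVec_injective_iff_isUnit, ← coe_mulVecLin, ← LinearMap.ker_eq_bot,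
    ker_mulVecLin_eq_bot_iff]
  intro x hx
  have hstep : ∀ i, x (σ i) = d i * x i := fun i ↦ by
    have := congrFun hx i
    simp only [sub_mulVec, permMatrix_mulVec, mulVec_diagonal,
      Pi.sub_apply, Function.comp_apply, Pi.zero_apply, sub_eq_zero] at this
    exact this.symm
  have horbit : ∀ m : ℕ, x ((σ ^ m) (σ k)) = 0 := fun m ↦ by
    induction m with
    | zero => simp [hstep, hk]
    | succ m ih => rw [pow_succ', Equiv.Perm.mul_apply, hstep, ih, mul_zero]
  funext j
  obtain ⟨m, hm⟩ := hσ.exists_pow_eq (hσ_supp (σ k)) (hσ_supp j)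
  rw [← hm, horbit]
  rfl

theorem isSumOfTwoUnits_diagonal_of_eq_zero {r : ℕ} (hr : 2 ≤ r) {d : Fin r → K} {k : Fin r}
    (hk : d k = 0) : IsSumOfTwoUnits (diagonal d) :=
  ⟨_, _, isUnit_diagonal_sub_permMatrix (isCycle_finRotate_of_le hr)
    (fun i ↦ Equiv.Perm.mem_support.mp (by simp [support_finRotate_of_le hr])) hk,
    isUnit_permMatrix _, (sub_add_cancel _ _).symm⟩

theorem isSumOfTwoUnits_of_forall_diagonal
    (h : ∀ d : n → K, IsSumOfTwoUnits (diagonal d)) (M : Matrix n n K) : IsSumOfTwoUnits M := by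
  obtain ⟨L, L', d, rfl⟩ := Pivot.exists_list_transvec_mul_diagonal_mul_list_transvec M
  refine (h d).mul_mul ?_ ?_ <;>
    simp [isUnit_iff_isUnit_det, TransvectionStruct.det_toMatrix_prod]

theorem isSumOfTwoUnits {r : ℕ} (hr : 2 ≤ r) (M : Matrix (Fin r) (Fin r) K) :
    IsSumOfTwoUnits M := by
  refine isSumOfTwoUnits_of_forall_diagonal (fun d ↦ ?_) M
  by_cases hd : ∃ k, d k = 0
  · obtain ⟨k, hk⟩ := hd
    exact isSumOfTwoUnits_diagonal_of_eq_zero hr hk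
  · push Not at hd
    exact (isSumOfTwoUnits_one hr).of_isUnit
      (isUnit_diagonal.mpr <| Pi.isUnit_iff.mpr fun i ↦ (hd i).isUnit)

end Matrix

/-- Every `r × r` matrix over `𝔽₂` with `r ≥ 2` is a sum of (at most) two invertible matrices. -/
theorem stmt_0 (r : ℕ) (hr : 2 ≤ r) (M : Matrix (Fin r) (Fin r) (ZMod 2)) :
    ∃ A B : Matrix (Fin r) (Fin r) (ZMod 2), IsUnit A ∧ IsUnit B ∧ M = A + B :=
  Matrix.isSumOfTwoUnits hr M
end

section
/- For every r ≥ 2, one has the strengthened bound ∏_{i=1}^r (1 − 2^{−i}) > 1/4 + 2^{−(r+3/2)}. -/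
/-- For `r ≥ 2`, `∏_{i=1}^r (1 − 2^{−i}) > 1/4 + 2^{−(r+3/2)}`. -/
theorem stmt_2 (r : ℕ) (hr : 2 ≤ r) :
    ∏ i ∈ Finset.Icc 1 r, (1 - (2 : ℝ) ^ (-(i : ℝ)))
      > 1 / 4 + (2 : ℝ) ^ (-((r : ℝ) + 3 / 2)) := by
  set a : ℝ := (2:ℝ) ^ (-(3/2:ℝ)) with ha_def
  have ha0 : 0 < a := Real.rpow_pos_of_pos two_pos _
  have hasq : a ^ 2 = 1/8 := by
    rw [ha_def, ← Real.rpow_natCast ((2:ℝ) ^ (-(3/2:ℝ))) 2,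
      ← Real.rpow_mul (by norm_num)]
    norm_num
  have ha3 : 1/3 ≤ a := by nlinarith
  have ha2 : a < 1/2 := by nlinarith
  have hcast : ∀ i : ℕ, (2:ℝ) ^ (-(i:ℝ)) = ((2:ℝ)^i)⁻¹ := fun i => by
    rw [Real.rpow_neg (by norm_num), Real.rpow_natCast]
  have hrhs : (2:ℝ) ^ (-((r:ℝ) + 3/2)) = a * ((2:ℝ)^r)⁻¹ := by
    rw [show -((r:ℝ)+3/2) = -(3/2) + -(r:ℝ) by ring, Real.rpow_add two_pos, hcast]
  rw [hrhs]
  simp only [hcast]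
  clear hrhs hcast ha_def hasq
  induction r, hr using Nat.le_induction with
  | base =>
    rw [show Finset.Icc 1 2 = {1, 2} by decide]
    rw [Finset.prod_insert (by decide), Finset.prod_singleton]
    norm_num
    nlinarith
  | succ n hn ih =>
    rw [Finset.prod_Icc_succ_top (by omega)]
    have h4 : (4:ℝ) ≤ 2^n := by
      calc (4:ℝ) = 2^2 := by norm_num
      _ ≤ 2^n := by exact pow_le_pow_right₀ one_le_two hn
    have hp : (0:ℝ) < 2^n := by positivity
    have hx : ((2:ℝ)^n)⁻¹ ≤ 1/4 := by
      rw [inv_le_comm₀ hp (by norm_num)]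
      linarith
    have hx0 : (0:ℝ) < ((2:ℝ)^n)⁻¹ := by positivity
    have hsucc : ((2:ℝ)^(n+1))⁻¹ = ((2:ℝ)^n)⁻¹ / 2 := by
      rw [pow_succ]
      field_simp
    rw [hsucc]
    set x := ((2:ℝ)^n)⁻¹
    have hfac : (0:ℝ) < 1 - x/2 := by nlinarith
    nlinarith [mul_lt_mul_of_pos_right ih hfac,
      mul_nonneg (mul_nonneg ha0.le hx0.le) (sub_nonneg.mpr hx),
      mul_nonneg hx0.le (sub_nonneg.mpr ha3)]
end

section
/- For every square matrix A over F₂ there exists a diagonal matrix D over F₂ such that A + D is invertible. -/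
/-- For every square matrix `A` over `𝔽₂` there is a diagonal matrix `D` with `A + D` invertible. -/
theorem stmt_3 (r : ℕ) (A : Matrix (Fin r) (Fin r) (ZMod 2)) :
    ∃ D : Matrix (Fin r) (Fin r) (ZMod 2), D.IsDiag ∧ IsUnit (A + D) := by
  classical
  let e : Fin r → (Fin r → ZMod 2) := fun i => Pi.single i 1
  let f := (Matrix.detRowAlternating :
    (Fin r → ZMod 2) [⋀^Fin r]→ₗ[ZMod 2] ZMod 2).toMultilinearMap
  have h := f.map_sum (g := fun i (c : ZMod 2) => A i + c • e i)
  have lhs : (f fun i => ∑ c : ZMod 2, (A i + c • e i)) = 1 := by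
    have hfun : (fun i => ∑ c : ZMod 2, (A i + c • e i)) = e := by
      funext i
      rw [Finset.sum_add_distrib, ← Finset.sum_smul]
      have h2 : (∑ c : ZMod 2, c) = 1 := by decide
      have h0 : (∑ _c : ZMod 2, A i) = 0 := by
        rw [Finset.sum_const]
        have : (Finset.univ : Finset (ZMod 2)).card = 2 := by decide
        rw [this]
        funext j
        show (2 : ℕ) • A i j = 0
        simp [two_smul]
        ring_nf
        exact ZMod.natCast_self 2 ▸ by
          have : ((2 : ℕ) : ZMod 2) = 0 := by decide
          calc A i j * 2 = A i j * ((2:ℕ) : ZMod 2) := by norm_num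
          _ = 0 := by rw [this, mul_zero]
      rw [h2, h0, one_smul, zero_add]
    rw [hfun]
    show Matrix.det (Matrix.of e) = 1
    have : Matrix.of e = (1 : Matrix (Fin r) (Fin r) (ZMod 2)) := by
      ext i j
      simp [e, Matrix.one_apply, Pi.single_apply, eq_comm]
    rw [this, Matrix.det_one]
  rw [lhs] at h
  have hex : ∃ p : Fin r → ZMod 2, (f fun i => A i + p i • e i) ≠ 0 := by
    by_contra hc
    push_neg at hc
    rw [Finset.sum_congr rfl (fun p _ => hc p)] at h
    simp at h
  obtain ⟨p, hp⟩ := hex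
  refine ⟨Matrix.diagonal p, Matrix.isDiag_diagonal p, ?_⟩
  have heq : A + Matrix.diagonal p = Matrix.of (fun i => A i + p i • e i) := by
    ext i j
    simp [e, Matrix.add_apply, Matrix.diagonal_apply, Pi.single_apply, mul_comm, eq_comm]
  rw [Matrix.isUnit_iff_isUnit_det, isUnit_iff_ne_zero, heq]
  exact hp
end

section
/- Let A be an r × r matrix over F₂ and P an r × r permutation matrix. Then there exists a matrix O over F₂ whose nonzero entries are supported on the nonzero entries of P (i.e., O = P·D for some diagonal D) such that A + O is invertible. -/
open Matrix

lemma aux_det_update (n : ℕ) (M : Matrix (Fin (n+1)) (Fin (n+1)) (ZMod 2)) (d : ZMod 2) :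
    det (M.updateRow 0 (M 0 + (Pi.single 0 d : Fin (n+1) → ZMod 2))) =
      det M + d * det (M.submatrix Fin.succ Fin.succ) := by
  rw [det_updateRow_add, updateRow_eq_self]
  congr 1
  rw [det_succ_row_zero]
  rw [Finset.sum_eq_single (0 : Fin (n+1))]
  · have hsub : (M.updateRow 0 ((Pi.single 0 d : Fin (n+1) → ZMod 2))).submatrix Fin.succ (0 : Fin (n+1)).succAbove
        = M.submatrix Fin.succ Fin.succ := by
      ext i j
      simp [updateRow_ne (Fin.succ_ne_zero i), Fin.succAbove_zero]
    rw [hsub]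
    simp
  · intro j _ hj
    simp [updateRow_self, Pi.single_eq_of_ne hj]
  · simp

lemma aux_exists_diag : ∀ (n : ℕ) (B : Matrix (Fin n) (Fin n) (ZMod 2)),
    ∃ f : Fin n → ZMod 2, det (B + Matrix.diagonal f) = 1 := by
  intro n
  induction n with
  | zero => exact fun B => ⟨fun _ => 0, det_fin_zero⟩
  | succ n ih =>
    intro B
    obtain ⟨f', hf'⟩ := ih (B.submatrix Fin.succ Fin.succ)
    set M := B + Matrix.diagonal (Fin.cases 0 f') with hM
    refine ⟨Fin.cases (1 - M.det) f', ?_⟩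
    have h1 : B + Matrix.diagonal (Fin.cases (1 - M.det) f')
        = M.updateRow 0 (M 0 + (Pi.single 0 (1 - M.det) : Fin (n+1) → ZMod 2)) := by
      ext i j
      rcases eq_or_ne i 0 with rfl | hi
      · rcases eq_or_ne j 0 with rfl | hj
        · simp [hM, updateRow_self, Matrix.diagonal_apply]
        · simp [hM, updateRow_self, Matrix.diagonal_apply_ne' _ hj,
            Pi.single_eq_of_ne hj]
      · obtain ⟨i, rfl⟩ := Fin.exists_succ_eq.2 hi
        rw [Matrix.updateRow_ne (Fin.succ_ne_zero i)]
        simp only [hM, Matrix.add_apply]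
        rcases eq_or_ne (Fin.succ i) j with rfl | h
        · simp
        · simp [Matrix.diagonal_apply_ne _ h]
    have h2 : M.submatrix Fin.succ Fin.succ
        = B.submatrix Fin.succ Fin.succ + Matrix.diagonal f' := by
      ext i j
      rcases eq_or_ne i j with rfl | hij
      · simp [hM, Matrix.diagonal_apply_eq]
      · simp [hM, Matrix.diagonal_apply_ne _ hij,
          Matrix.diagonal_apply_ne _ (fun h => hij (Fin.succ_inj.mp h))]
    rw [h1, aux_det_update, h2, hf']
    ring

/-- For any matrix `A` over `𝔽₂` and permutation matrix `P`, there is a matrix `O`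
supported on the nonzero entries of `P` (indeed `O = P · D` with `D` diagonal)
such that `A + O` is invertible. -/
theorem stmt_4 (r : ℕ) (A : Matrix (Fin r) (Fin r) (ZMod 2)) (σ : Equiv.Perm (Fin r)) :
    ∃ O : Matrix (Fin r) (Fin r) (ZMod 2),
      (∃ D : Matrix (Fin r) (Fin r) (ZMod 2), D.IsDiag ∧ O = σ.permMatrix (ZMod 2) * D) ∧
      (∀ i j, σ.permMatrix (ZMod 2) i j = 0 → O i j = 0) ∧
      IsUnit (A + O) := by
  obtain ⟨f, hf⟩ := aux_exists_diag r (A.submatrix σ.symm id)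
  set P := σ.permMatrix (ZMod 2) with hP
  refine ⟨P * Matrix.diagonal f, ⟨Matrix.diagonal f, Matrix.isDiag_diagonal f, rfl⟩, ?_, ?_⟩
  · intro i j hij
    have : P i j = if σ i = j then 1 else 0 := by
      simp [hP, Equiv.Perm.permMatrix, PEquiv.toMatrix_apply, Equiv.toPEquiv_apply]
    rw [this] at hij
    by_cases h : σ i = j
    · simp [h] at hij
    · have : (P * Matrix.diagonal f) i j = P i j * f j := by
        simp [Matrix.mul_diagonal]
      rw [this]
      simp [hP, Equiv.Perm.permMatrix, PEquiv.toMatrix_apply, Equiv.toPEquiv_apply, h]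
  · have key : A + P * Matrix.diagonal f = P * (A.submatrix σ.symm id + Matrix.diagonal f) := by
      have hPA : P * (A.submatrix σ.symm id) = A := by
        rw [hP, Equiv.Perm.permMatrix, PEquiv.toMatrix_toPEquiv_mul]
        ext i j
        simp
      rw [Matrix.mul_add, hPA]
    rw [key]
    apply (Matrix.isUnit_iff_isUnit_det _).mpr
    rw [Matrix.det_mul]
    apply IsUnit.mul
    · rw [hP, Matrix.det_permutation]
      rcases Int.units_eq_one_or (Equiv.Perm.sign σ) with h | h <;> simp [h]
    · rw [hf]; exact isUnit_one
end

section
/- Let D be a diagonal r × r matrix over F₂ and let P be the permutation matrix of an r-cycle. Then either D is invertible (i.e., D = I) or D + P is invertible. -/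
/-- If `D` is diagonal over `𝔽₂` and `P` is the permutation matrix of an `r`-cycle,
then either `D` is invertible or `D + P` is invertible. -/
theorem stmt_5 (r : ℕ) (D : Matrix (Fin r) (Fin r) (ZMod 2)) (hD : D.IsDiag)
    (σ : Equiv.Perm (Fin r)) (hσ : σ.IsCycle) (hsupp : σ.support.card = r) :
    IsUnit D ∨ IsUnit (D + σ.permMatrix (ZMod 2)) := by
  by_cases h : IsUnit D
  · exact Or.inl h
  right
  -- some diagonal entry is zero
  have hdet : D.det = ∏ i, D i i := by
    conv_lhs => rw [← hD.diagonal_diag]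
    simp [Matrix.det_diagonal, Matrix.diag]
  obtain ⟨j, -, hj⟩ : ∃ j ∈ Finset.univ, D j j = 0 := by
    rw [← Finset.prod_eq_zero_iff, ← hdet]
    by_contra hne
    exact h ((Matrix.isUnit_iff_isUnit_det D).2 (isUnit_iff_ne_zero.2 hne))
  -- every element is non-fixed
  have hfull : σ.support = Finset.univ := Finset.eq_univ_of_card _ (by simpa using hsupp)
  have hmove : ∀ i : Fin r, σ i ≠ i := fun i =>
    Equiv.Perm.mem_support.1 (hfull ▸ Finset.mem_univ i)
  rw [← Matrix.mulVec_injective_iff_isUnit]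
  intro a b hab
  rw [← sub_eq_zero]
  set x := a - b with hxdef
  have hx : (D + σ.permMatrix (ZMod 2)).mulVec x = 0 := by
    rw [hxdef, Matrix.mulVec_sub, hab, sub_self]
  have key : ∀ i, x (σ i) = D i i * x i := by
    intro i
    have := congrFun hx i
    have hP : ((σ.permMatrix (ZMod 2)).mulVec x) i = x (σ i) := by
      simp [Equiv.Perm.permMatrix, Matrix.mulVec, dotProduct, PEquiv.toMatrix,
        Equiv.toPEquiv, Finset.sum_ite_eq]
    have hDm : (D.mulVec x) i = D i i * x i := by
      conv_lhs => rw [← hD.diagonal_diag]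
      simp [Matrix.mulVec_diagonal, Matrix.diag]
    rw [Matrix.add_mulVec, Pi.add_apply, hP, hDm] at this
    have h2 : ∀ u v : ZMod 2, u + v = 0 → v = u := by decide
    exact h2 _ _ this
  have hz : ∀ n : ℕ, x ((σ ^ (n + 1)) j) = 0 := by
    intro n
    induction n with
    | zero => simpa [hj] using key j
    | succ n ih =>
      have : (σ ^ (n + 2)) j = σ ((σ ^ (n + 1)) j) := by
        rw [pow_succ']; rfl
      rw [this, key, ih, mul_zero]
  show x = 0
  funext i
  show x i = 0
  have hsc : σ.SameCycle j i := hσ.sameCycle (hmove j) (hmove i)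
  obtain ⟨k, hk, -, hki⟩ := hsc.exists_pow_eq''
  obtain ⟨m, rfl⟩ := Nat.exists_eq_add_of_lt hk
  rw [← hki]
  simpa using hz m
end

section
/- Let V be a d-dimensional linear subspace of the space of r × r matrices over F₂. Then there exists a subset T of GL_r(2) with |T| ≤ d + 2 such that V is contained in the F₂-span of T. -/
/-!
Call `S` a good shift for `V` if the `g ∈ V` with `S + g` invertible span `V`. For a good shift,
a basis of `V` chosen among these `g` gives `d` invertible matrices `S + g`, and `S` lies in the
span of two invertible matrices (identify `𝔽₂^r` with `𝔽_{2^r}` and write `S = (S + α) - α`, where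
`α` is a multiplication chosen so that `S + α` is invertible); these `d + 2` matrices span `V`.

A good shift exists by counting: if no shift were good, then in every coset `b₀ + V` the
differences `b - b₀` of invertible elements would span a subspace of codimension at least `2` in
`V`, so each coset would hold at most `2^(d-2)` invertible matrices, `2^(r²-2)` in all, whereas
`|GL_r(𝔽₂)| > 2^(r²-2)`.
-/

open Module Submodule Finset

namespace Submodule

variable {K M : Type*} [Field K] [AddCommGroup M] [Module K M]

def shiftSpan (V : Submodule K M) (U : Set M) (S : M) : Submodule K M :=
  span K {g | g ∈ V ∧ S + g ∈ U}

variable {V : Submodule K M} {U : Set M}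

theorem shiftSpan_le (S : M) : V.shiftSpan U S ≤ V :=
  span_le.mpr fun _ hg ↦ hg.1

theorem subset_shiftSpan {S g : M} (hg : g ∈ V) (hSg : S + g ∈ U) : g ∈ V.shiftSpan U S :=
  subset_span ⟨hg, hSg⟩

theorem finrank_span_sub_add_two_le [FiniteDimensional K M] (hU : ∀ S, V.shiftSpan U S ≠ V)
    {b₀ : M} (hb₀ : b₀ ∈ U) :
    finrank K (span K ((· - b₀) '' {b | b ∈ U ∧ b - b₀ ∈ V})) + 2 ≤ finrank K V := by
  set D := span K ((· - b₀) '' {b | b ∈ U ∧ b - b₀ ∈ V})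
  obtain ⟨v, hvV, hv⟩ := SetLike.exists_of_lt ((shiftSpan_le b₀).lt_of_ne (hU b₀))
  have hD : D ≤ V.shiftSpan U b₀ := by
    rw [span_le]
    rintro _ ⟨b, ⟨hbU, hbV⟩, rfl⟩
    exact subset_shiftSpan hbV (by rwa [add_sub_cancel])
  have hv' : v ∈ V.shiftSpan U (b₀ - v) := subset_shiftSpan hvV (by rwa [sub_add_cancel])
  -- `b - b₀ = (b - b₀ + v) - v`, so `D` also lies below the proper subspace for the shift `b₀ - v`,
  -- which contains `v ∉ D`
  have hD' : D ≤ V.shiftSpan U (b₀ - v) := by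
    rw [span_le]
    rintro _ ⟨b, ⟨hbU, hbV⟩, rfl⟩
    have : b - b₀ + v ∈ V.shiftSpan U (b₀ - v) :=
      subset_shiftSpan (V.add_mem hbV hvV) (by convert hbU using 1; abel)
    simpa using sub_mem this hv'
  have hlt : D < V.shiftSpan U (b₀ - v) := hD'.lt_of_ne (fun h ↦ hv (hD (h ▸ hv')))
  have h₁ := finrank_lt_finrank_of_lt hlt
  have h₂ := finrank_lt_finrank_of_lt ((shiftSpan_le (b₀ - v)).lt_of_ne (hU (b₀ - v)))
  omega

theorem card_pow_two_mul_card_fiber_le [Fintype K] [Fintype M] (hU : ∀ S, V.shiftSpan U S ≠ V)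
    [DecidablePred (· ∈ U)] [DecidableEq (M ⧸ V)] (z : M ⧸ V) :
    Fintype.card K ^ 2 * #{b | b ∈ U ∧ V.mkQ b = z} ≤ Nat.card V := by
  classical
  rcases Finset.eq_empty_or_nonempty {b | b ∈ U ∧ V.mkQ b = z} with h | ⟨b₀, hb₀⟩
  · rw [h, card_empty, mul_zero]; exact Nat.zero_le _
  simp only [Finset.mem_filter, Finset.mem_univ, true_and] at hb₀
  set D := span K ((· - b₀) '' {b | b ∈ U ∧ b - b₀ ∈ V})
  have hsub : ({b | b ∈ U ∧ V.mkQ b = z} : Finset M).image (· - b₀) ⊆ (D : Set M).toFinset := by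
    simp only [Finset.subset_iff, Finset.mem_image, Finset.mem_filter, Finset.mem_univ,
      true_and, Set.mem_toFinset, SetLike.mem_coe]
    rintro _ ⟨b, ⟨hbU, hbz⟩, rfl⟩
    refine subset_span ⟨b, ⟨hbU, ?_⟩, rfl⟩
    rw [← Submodule.Quotient.eq, ← mkQ_apply, ← mkQ_apply, hbz, hb₀.2]
  have hcard : #{b | b ∈ U ∧ V.mkQ b = z} ≤ Nat.card D := by
    rw [← card_image_of_injective _ (sub_left_injective (b := b₀))]
    exact (card_le_card hsub).trans_eq (Nat.card_eq_card_toFinset (D : Set M)).symm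
  calc Fintype.card K ^ 2 * #{b | b ∈ U ∧ V.mkQ b = z}
      ≤ Fintype.card K ^ 2 * Nat.card D := Nat.mul_le_mul_left _ hcard
    _ = Fintype.card K ^ (finrank K D + 2) := by
        rw [Nat.card_eq_fintype_card, card_eq_pow_finrank (K := K) (V := D), pow_add, mul_comm]
    _ ≤ Fintype.card K ^ finrank K V :=
        Nat.pow_le_pow_right Fintype.card_pos (finrank_span_sub_add_two_le hU hb₀.1)
    _ = Nat.card V := by rw [Nat.card_eq_fintype_card, card_eq_pow_finrank (K := K) (V := V)]

variable (V) in
theorem exists_le_shiftSpan [Fintype K] [Fintype M]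
    (hU : Nat.card M < Fintype.card K ^ 2 * Nat.card U) : ∃ S, V ≤ V.shiftSpan U S := by
  classical
  by_contra! h
  have hU' : ∀ S, V.shiftSpan U S ≠ V := fun S hS ↦ h S hS.ge
  have hfib : Nat.card U = ∑ z : M ⧸ V, #{b | b ∈ U ∧ V.mkQ b = z} := by
    rw [Nat.card_eq_card_toFinset, card_eq_sum_card_fiberwise (f := V.mkQ) (t := univ)
      (fun _ _ ↦ mem_univ _)]
    congr! 2 with z
    ext b
    simp only [mem_filter, Set.mem_toFinset, mem_univ, true_and]
  have : Fintype.card K ^ 2 * Nat.card U ≤ Nat.card M := by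
    calc Fintype.card K ^ 2 * Nat.card U
        = ∑ z : M ⧸ V, Fintype.card K ^ 2 * #{b | b ∈ U ∧ V.mkQ b = z} := by
          rw [hfib, mul_sum]
      _ ≤ ∑ _z : M ⧸ V, Nat.card V := sum_le_sum fun z _ ↦ card_pow_two_mul_card_fiber_le hU' z
      _ = Nat.card M := by
          rw [sum_const, card_univ, smul_eq_mul, ← Nat.card_eq_fintype_card, mul_comm,
            V.card_eq_card_quotient_mul_card]
  exact this.not_gt hU

theorem exists_finset_card_le_finrank_le_span_insert [FiniteDimensional K M] {S : M}
    (hS : V ≤ V.shiftSpan U S) :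
    ∃ t : Finset M, ↑t ⊆ U ∧ #t ≤ finrank K V ∧ V ≤ span K (insert S ↑t) := by
  classical
  have hV : span K {g | g ∈ V ∧ S + g ∈ U} = V := (shiftSpan_le S).antisymm hS
  obtain ⟨t, hts, htcard, htspan, -⟩ :=
    exists_finset_span_eq_linearIndepOn K {g | g ∈ V ∧ S + g ∈ U}
  refine ⟨t.image (S + ·), ?_, ?_, ?_⟩
  · rw [coe_image]
    rintro _ ⟨g, hg, rfl⟩
    exact (hts hg).2
  · rw [← hV, ← htcard]
    exact card_image_le
  · rw [← hV, ← htspan, span_le]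
    intro g hg
    have hSg : S + g ∈ span K (insert S ↑(t.image (S + ·))) :=
      subset_span (Set.mem_insert_of_mem _ (mem_coe.mpr (mem_image_of_mem _ hg)))
    simpa using sub_mem hSg (subset_span (Set.mem_insert S _))

end Submodule

theorem LinearMap.exists_isUnit_add_mulLeft {K L : Type*} [Field K] [Field L] [Finite L]
    [Algebra K L] (f : L →ₗ[K] L) : ∃ α : L, IsUnit (f + LinearMap.mulLeft K α) := by
  -- `x ↦ -f x / x` on the `|L| - 1` nonzero elements cannot take every value in `L`
  obtain ⟨α, hα⟩ : ∃ α : L, ∀ x : {x : L // x ≠ 0}, -f x / x ≠ α := by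
    by_contra! h
    have := Nat.card_le_card_of_surjective (fun x : {x : L // x ≠ 0} ↦ -f x / x) h
    exact (Finite.card_subtype_lt (p := (· ≠ (0 : L))) (not_not.mpr rfl)).not_ge this
  refine ⟨α, (Module.End.isUnit_iff _).mpr (Finite.injective_iff_bijective.mp ?_)⟩
  refine (injective_iff_map_eq_zero _).mpr fun x hx ↦ ?_
  by_contra hx₀
  refine hα ⟨x, hx₀⟩ ?_
  rw [LinearMap.add_apply, LinearMap.mulLeft_apply, add_eq_zero_iff_eq_neg] at hx
  field_simp
  rw [hx, neg_neg, mul_comm]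

theorem Matrix.exists_isUnit_isUnit_mem_span_pair {n : Type*} [Fintype n] [DecidableEq n]
    {p : ℕ} [Fact p.Prime] (S : Matrix n n (ZMod p)) :
    ∃ A B : Matrix n n (ZMod p), IsUnit A ∧ IsUnit B ∧ S ∈ span (ZMod p) {A, B} := by
  have pair_of_isUnit (hS : IsUnit S) : ∃ A B : Matrix n n (ZMod p),
      IsUnit A ∧ IsUnit B ∧ S ∈ span (ZMod p) {A, B} :=
    ⟨S, S, hS, hS, subset_span (Set.mem_insert S _)⟩
  cases isEmpty_or_nonempty n
  · exact pair_of_isUnit (isUnit_of_subsingleton S)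
  -- identify `Matrix n n (ZMod p)` with the endomorphisms of the field with `p ^ |n|` elements
  let L := GaloisField p (Fintype.card n)
  let b : Basis n (ZMod p) L :=
    (finBasisOfFinrankEq (ZMod p) L (GaloisField.finrank p Fintype.card_ne_zero)).reindex
      (Fintype.equivFin n).symm
  let e := LinearMap.toMatrixAlgEquiv b
  obtain ⟨α, hα⟩ := (e.symm S).exists_isUnit_add_mulLeft
  rcases eq_or_ne α 0 with rfl | hα₀
  · rw [LinearMap.mulLeft_zero_eq_zero, add_zero] at hα
    exact pair_of_isUnit (by simpa only [AlgEquiv.apply_symm_apply] using hα.map e)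
  have hA : IsUnit (LinearMap.mulLeft (ZMod p) α) := hα₀.isUnit.map (Algebra.lmul (ZMod p) _)
  refine ⟨e (LinearMap.mulLeft (ZMod p) α), S + e (LinearMap.mulLeft (ZMod p) α), hA.map e,
    by simpa only [map_add, AlgEquiv.apply_symm_apply] using hα.map e, ?_⟩
  set A := e (LinearMap.mulLeft (ZMod p) α)
  have hB : S + A ∈ span (ZMod p) {A, S + A} :=
    subset_span (Set.mem_insert_of_mem _ (Set.mem_singleton _))
  simpa only [add_sub_cancel_right] using sub_mem hB (subset_span (Set.mem_insert A _))

theorem prod_range_succ_pow_sub_pow (q r : ℕ) :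
    ∏ i ∈ range (r + 1), (q ^ (r + 1) - q ^ i)
      = (q ^ (r + 1) - 1) * q ^ r * ∏ i ∈ range r, (q ^ r - q ^ i) := by
  have h (i : ℕ) : q ^ (r + 1) - q ^ (i + 1) = q * (q ^ r - q ^ i) := by
    rw [pow_succ', pow_succ', Nat.mul_sub]
  rw [prod_range_succ', pow_zero, prod_congr rfl fun i _ ↦ h i, prod_mul_distrib, prod_const,
    card_range]
  ring

-- `∏_{k ≤ r} (1 - 2⁻ᵏ) ≥ 1/4 + 2^(-r-1)`, strengthened from `> 1/4` so that the induction closes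
theorem two_pow_mul_add_two_le_prod (r : ℕ) :
    2 ^ (r * r) * (2 ^ r + 2) ≤ 2 ^ (r + 2) * ∏ i ∈ range r, (2 ^ r - 2 ^ i) := by
  induction r with
  | zero => simp
  | succ r ih =>
    rcases Nat.eq_zero_or_pos r with rfl | hr
    · simp
    rw [prod_range_succ_pow_sub_pow, show 2 ^ ((r + 1) * (r + 1)) = 2 ^ (r * r) * 2 ^ r * 2 ^ r * 2
      by ring, show 2 ^ (r + 1 + 2) = 2 ^ r * 8 by ring, pow_succ]
    rw [show 2 ^ (r + 2) = 2 ^ r * 4 by ring] at ih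
    have hx : 2 ≤ 2 ^ r := Nat.le_self_pow hr.ne' 2
    generalize 2 ^ (r * r) = a at *
    generalize ∏ i ∈ range r, (2 ^ r - 2 ^ i) = P at *
    generalize 2 ^ r = x at *
    have key : x * (x * 2 + 2) ≤ (x * 2 - 1) * (x + 2) := by
      zify [show 1 ≤ x * 2 by omega]; nlinarith
    nlinarith [Nat.mul_le_mul_left (2 * x * a) key, Nat.mul_le_mul_left (2 * x * (x * 2 - 1)) ih]

theorem Nat.card_setOf_isUnit (M : Type*) [Monoid M] :
    Nat.card {x : M | IsUnit x} = Nat.card Mˣ :=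
  (Nat.card_congr (Equiv.ofInjective _ Units.val_injective)).symm

theorem Matrix.two_pow_lt_four_mul_card_GL (r : ℕ) :
    2 ^ (r * r) < 4 * Nat.card (GL (Fin r) (ZMod 2)) := by
  rw [card_GL_field, ZMod.card, Fin.prod_univ_eq_prod_range (fun i ↦ 2 ^ r - 2 ^ i)]
  refine Nat.lt_of_mul_lt_mul_right (a := 2 ^ r) ?_
  calc 2 ^ (r * r) * 2 ^ r < 2 ^ (r * r) * (2 ^ r + 2) := by gcongr; omega
    _ ≤ 2 ^ (r + 2) * ∏ i ∈ range r, (2 ^ r - 2 ^ i) := two_pow_mul_add_two_le_prod r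
    _ = (4 * ∏ i ∈ range r, (2 ^ r - 2 ^ i)) * 2 ^ r := by ring

/-- Any `d`-dimensional subspace of `M_r(𝔽₂)` is contained in the span of at most `d + 2`
invertible matrices. -/
theorem stmt_6 (r d : ℕ) (V : Submodule (ZMod 2) (Matrix (Fin r) (Fin r) (ZMod 2)))
    (hV : Module.finrank (ZMod 2) V = d) :
    ∃ T : Finset (Matrix (Fin r) (Fin r) (ZMod 2)),
      (∀ M ∈ T, IsUnit M) ∧ T.card ≤ d + 2 ∧
      V ≤ Submodule.span (ZMod 2) (T : Set (Matrix (Fin r) (Fin r) (ZMod 2))) := by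
  classical
  have hunits : Nat.card (Matrix (Fin r) (Fin r) (ZMod 2)) <
      Fintype.card (ZMod 2) ^ 2 * Nat.card {M : Matrix (Fin r) (Fin r) (ZMod 2) | IsUnit M} := by
    rw [Nat.card_setOf_isUnit, Nat.card_eq_fintype_card, card_eq_pow_finrank (K := ZMod 2),
      ZMod.card, finrank_matrix]
    simpa using Matrix.two_pow_lt_four_mul_card_GL r
  obtain ⟨S, hS⟩ := V.exists_le_shiftSpan hunits
  obtain ⟨t, htU, htcard, hVt⟩ := exists_finset_card_le_finrank_le_span_insert hS
  obtain ⟨A, B, hA, hB, hSAB⟩ := S.exists_isUnit_isUnit_mem_span_pair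
  refine ⟨insert A (insert B t), ?_, ?_, hVt.trans (span_le.mpr ?_)⟩
  · simpa [hA, hB] using fun M hM ↦ htU hM
  · have := (card_insert_le A _).trans (Nat.succ_le_succ (card_insert_le B t))
    omega
  · rintro M (rfl | hM)
    · exact span_mono (by simp [Set.insert_subset_iff]) hSAB
    · exact subset_span (by simp [hM])
end

section
/- Every square matrix over a field K is the product of two symmetric matrices over K. -/
/-!
Over `K[X]`, the vector space on which `M` acts is a finite direct sum of cyclic modules
`K[X] ⧸ (q)`. For `q` monic of degree `d`, the form `(a, b) ↦ coeff (a * b %ₘ q) (d - 1)` on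
`K[X] ⧸ (q)` is symmetric and nondegenerate, and multiplication by `X` is self-adjoint for it.
The orthogonal sum of these forms has a Gram matrix `T` that is symmetric, invertible and
satisfies `Mᵀ * T = T * M`, so `M = T⁻¹ * (T * M)` is a product of two symmetric matrices.
-/

open Polynomial
open scoped Matrix

def HasSelfAdjointXForm (K W : Type*) [Field K] [AddCommGroup W] [Module K W]
    [Module K[X] W] : Prop :=
  ∃ B : LinearMap.BilinForm K W, B.IsSymm ∧ B.Nondegenerate ∧ B.IsSelfAdjoint ((X : K[X]) • ·)

section

variable {K : Type*} [Field K]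

theorem hasSelfAdjointXForm_of_exists_mul_ne_zero {A : Type*} [CommRing A] [Algebra K A]
    [Algebra K[X] A] (l : A →ₗ[K] K) (hl : ∀ x ≠ 0, ∃ y, l (x * y) ≠ 0) :
    HasSelfAdjointXForm K A := by
  have hsymm : LinearMap.BilinForm.IsSymm ((LinearMap.mul K A).compr₂ l) :=
    ⟨fun x y => by simp only [LinearMap.compr₂_apply, LinearMap.mul_apply', mul_comm]⟩
  refine ⟨(LinearMap.mul K A).compr₂ l, hsymm, ?_, fun x y => ?_⟩
  · refine hsymm.isRefl.nondegenerate_iff_separatingLeft.mpr fun x hx => ?_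
    by_contra hx0
    obtain ⟨y, hy⟩ := hl x hx0
    exact hy (hx y)
  · simp only [LinearMap.compr₂_apply, LinearMap.mul_apply', Algebra.smul_def]
    rw [mul_assoc, mul_left_comm x]

theorem Polynomial.coeff_mul_X_pow_modByMonic_ne_zero {q r : K[X]} (hq : q.Monic) (hr : r ≠ 0)
    (hrq : r.degree < q.degree) :
    ((r * X ^ (q.natDegree - 1 - r.natDegree)) %ₘ q).coeff (q.natDegree - 1) ≠ 0 := by
  have hlt : r.natDegree < q.natDegree := natDegree_lt_natDegree hr hrq
  have hdeg : (r * X ^ (q.natDegree - 1 - r.natDegree)).natDegree < q.natDegree := by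
    rw [natDegree_mul_X_pow _ hr]; omega
  rw [(modByMonic_eq_self_iff hq).mpr (degree_lt_degree hdeg), coeff_mul_X_pow',
    if_pos (Nat.sub_le _ _), Nat.sub_sub_self (by omega)]
  exact leadingCoeff_ne_zero.mpr hr

theorem hasSelfAdjointXForm_quotient_span_singleton_of_monic {q : K[X]} (hq : q.Monic) :
    HasSelfAdjointXForm K (K[X] ⧸ K[X] ∙ q) := by
  -- `AdjoinRoot q` is by definition `K[X] ⧸ K[X] ∙ q`
  let l : K[X] ⧸ K[X] ∙ q →ₗ[K] K :=
    (lcoeff K (q.natDegree - 1)).comp (AdjoinRoot.modByMonicHom hq)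
  refine hasSelfAdjointXForm_of_exists_mul_ne_zero l fun x hx => ?_
  obtain ⟨s, rfl⟩ := AdjoinRoot.mk_surjective x
  rw [← AdjoinRoot.mk_leftInverse hq (AdjoinRoot.mk q s), AdjoinRoot.modByMonicHom_mk] at hx ⊢
  refine ⟨AdjoinRoot.mk q (X ^ (q.natDegree - 1 - (s %ₘ q).natDegree)), ?_⟩
  have hr : s %ₘ q ≠ 0 := fun h => hx (by rw [h]; exact map_zero _)
  show ((AdjoinRoot.modByMonicHom hq) (AdjoinRoot.mk q _ * AdjoinRoot.mk q _)).coeff _ ≠ 0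
  rw [← map_mul, AdjoinRoot.modByMonicHom_mk]
  exact coeff_mul_X_pow_modByMonic_ne_zero hq hr (degree_modByMonic_lt s hq)

theorem hasSelfAdjointXForm_quotient_span_singleton {q : K[X]} (hq : q ≠ 0) :
    HasSelfAdjointXForm K (K[X] ⧸ K[X] ∙ q) := by
  classical
  rw [show K[X] ∙ q = K[X] ∙ normalize q from
    Ideal.span_singleton_eq_span_singleton.mpr (associated_normalize q)]
  exact hasSelfAdjointXForm_quotient_span_singleton_of_monic (monic_normalize hq)

theorem hasSelfAdjointXForm_pi {ι : Type*} [Fintype ι] {W : ι → Type*}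
    [∀ i, AddCommGroup (W i)] [∀ i, Module K (W i)] [∀ i, Module K[X] (W i)]
    (h : ∀ i, HasSelfAdjointXForm K (W i)) : HasSelfAdjointXForm K (Π i, W i) := by
  classical
  choose B hsymm hnd hadj using h
  let Bpi : LinearMap.BilinForm K (Π i, W i) :=
    ∑ i, (B i).compl₁₂ (LinearMap.proj i) (LinearMap.proj i)
  have hBpi : ∀ x y, Bpi x y = ∑ i, B i (x i) (y i) := fun x y => by
    simp [Bpi, LinearMap.sum_apply]
  have hsymmpi : Bpi.IsSymm := ⟨fun x y => by simp only [hBpi, (hsymm _).eq]⟩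
  refine ⟨Bpi, hsymmpi, hsymmpi.isRefl.nondegenerate_iff_separatingLeft.mpr fun x hx => ?_,
    fun x y => by simp only [hBpi, Pi.smul_apply, hadj _ _ _]⟩
  funext i
  refine (hnd i).1 (x i) fun v => ?_
  have hv := hx (Pi.single i v)
  rwa [hBpi, Finset.sum_eq_single i (fun j _ hji => by rw [Pi.single_eq_of_ne hji, map_zero])
    (by simp), Pi.single_eq_same] at hv

theorem HasSelfAdjointXForm.of_linearEquiv {W₁ W₂ : Type*} [AddCommGroup W₁] [Module K W₁]
    [Module K[X] W₁] [IsScalarTower K K[X] W₁] [AddCommGroup W₂] [Module K W₂] [Module K[X] W₂]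
    [IsScalarTower K K[X] W₂] (e : W₁ ≃ₗ[K[X]] W₂) (h : HasSelfAdjointXForm K W₂) :
    HasSelfAdjointXForm K W₁ := by
  obtain ⟨B, hsymm, hnd, hadj⟩ := h
  refine ⟨LinearMap.BilinForm.congr (e.restrictScalars K).symm B, ⟨fun x y => hsymm.eq _ _⟩,
    (LinearMap.BilinForm.nondegenerate_congr_iff _).mpr hnd, fun x y => ?_⟩
  simpa using hadj (e x) (e y)

theorem LinearMap.exists_bilinForm_isSelfAdjoint {V : Type*} [AddCommGroup V] [Module K V]
    [FiniteDimensional K V] (f : Module.End K V) :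
    ∃ B : LinearMap.BilinForm K V, B.IsSymm ∧ B.Nondegenerate ∧ B.IsSelfAdjoint f := by
  obtain ⟨ι, _, p, hp, e, ⟨φ⟩⟩ := Module.equiv_directSum_of_isTorsion
    (Module.AEval.isTorsion_of_finiteDimensional K V f)
  obtain ⟨B, hsymm, hnd, hadj⟩ : HasSelfAdjointXForm K (Module.AEval' f) :=
    (hasSelfAdjointXForm_pi fun i => hasSelfAdjointXForm_quotient_span_singleton
      (pow_ne_zero (e i) (hp i).ne_zero)).of_linearEquiv
      (φ.trans (DirectSum.linearEquivFunOnFintype K[X] ι _))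
  refine ⟨LinearMap.BilinForm.congr (Module.AEval'.of f).symm B, ⟨fun x y => hsymm.eq _ _⟩,
    (LinearMap.BilinForm.nondegenerate_congr_iff _).mpr hnd, fun x y => ?_⟩
  simpa [← Module.AEval'.X_smul_of] using hadj (Module.AEval'.of f x) (Module.AEval'.of f y)

theorem Matrix.exists_isSymm_isUnit_det_transpose_mul_eq {ι : Type*} [Fintype ι]
    [DecidableEq ι] (M : Matrix ι ι K) :
    ∃ T : Matrix ι ι K, T.IsSymm ∧ IsUnit T.det ∧ Mᵀ * T = T * M := by
  obtain ⟨B, hsymm, hnd, hadj⟩ := M.toLin'.exists_bilinForm_isSelfAdjoint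
  refine ⟨B.toMatrix', B.isSymm_toMatrix'_iff_isSymm.mpr hsymm,
    (Matrix.nondegenerate_iff_det_ne_zero.mp hnd.toMatrix').isUnit, ?_⟩
  rw [← Matrix.toBilin'_toMatrix' B] at hadj
  exact (isAdjointPair_toLinearMap₂' _ _ M M).mp hadj

end

/-- Every square matrix over a field is the product of two symmetric matrices. -/
theorem stmt_8 (K : Type*) [Field K] (n : ℕ) (M : Matrix (Fin n) (Fin n) K) :
    ∃ S₁ S₂ : Matrix (Fin n) (Fin n) K, S₁.IsSymm ∧ S₂.IsSymm ∧ M = S₁ * S₂ := by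
  obtain ⟨T, hT, hdet, hMT⟩ := M.exists_isSymm_isUnit_det_transpose_mul_eq
  refine ⟨T⁻¹, T * M, hT.inv, ?_, (T.nonsing_inv_mul_cancel_left M hdet).symm⟩
  rw [Matrix.IsSymm, Matrix.transpose_mul, hT.eq, hMT]
end

section
/- For every 2n × 2n symplectic matrix χ over F₂ (form Ω = [[0,I],[I,0]]) there exists a symmetric matrix K over F₂ with at most one nonzero entry per row and column (in fact K may be taken diagonal) such that [[I, K],[0, I]] · χ has invertible top-left n × n block. -/
/-! Write `A = χ₁₁` and `C = χ₂₁`. A symplectic `χ` is invertible, so `ker A ∩ ker C = 0`, and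
`AᵀC` is symmetric. If `Ax = 0` with `x ≠ 0`, then `Cx ≠ 0` lies in `ker Aᵀ`; choosing a coordinate
`i` with `(Cx)ᵢ ≠ 0`, pairing with `Cx` shows `ker (A + EᵢᵢC) ⊆ ker A`, and `x` is lost from the
kernel. Both hypotheses survive the replacement `A ↦ A + EᵢᵢC`, so iterating yields a diagonal `K`
with `A + KC`, the top-left block of `[[I,K],[0,I]] χ`, invertible. -/

open Matrix Module

section DiagonalCorrection

variable {m R : Type*} [Fintype m] [DecidableEq m] [Field R]

lemma add_diagonal_single_mul_mulVec (A C : Matrix m m R) (i : m) (y : m → R) :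
    (A + diagonal (Pi.single i 1) * C) *ᵥ y = A *ᵥ y + Pi.single i ((C *ᵥ y) i) := by
  rw [add_mulVec, ← mulVec_mulVec]
  congr 1
  ext j
  rcases eq_or_ne j i with rfl | hji <;> simp [mulVec_diagonal, *]

lemma transpose_mul_add_diagonal_mul_comm {A C : Matrix m m R} (hAC : Aᵀ * C = Cᵀ * A)
    (d : m → R) : (A + diagonal d * C)ᵀ * C = Cᵀ * (A + diagonal d * C) := by
  rw [transpose_add, transpose_mul, diagonal_transpose, add_mul, hAC, mul_add, mul_assoc]

lemma ker_mulVecLin_add_diagonal_single_mul_lt {A C : Matrix m m R} (hAC : Aᵀ * C = Cᵀ * A)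
    {x : m → R} (hx : A *ᵥ x = 0) {i : m} (hi : (C *ᵥ x) i ≠ 0) :
    LinearMap.ker (A + diagonal (Pi.single i 1) * C).mulVecLin < LinearMap.ker A.mulVecLin := by
  have hCx : (C *ᵥ x) ᵥ* A = 0 := by
    rw [← mulVec_transpose, mulVec_mulVec, hAC, ← mulVec_mulVec, hx, mulVec_zero]
  refine SetLike.lt_iff_le_and_exists.mpr ⟨fun y hy ↦ ?_, x, hx, fun hx' ↦ hi ?_⟩
  · simp only [LinearMap.mem_ker, mulVecLin_apply, add_diagonal_single_mul_mulVec] at hy ⊢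
    have hpair := congrArg ((C *ᵥ x) ⬝ᵥ ·) hy
    simp only [dotProduct_add, dotProduct_mulVec, hCx, zero_dotProduct, zero_add,
      dotProduct_single, dotProduct_zero, mul_eq_zero, hi, false_or] at hpair
    simpa [hpair] using hy
  · rw [LinearMap.mem_ker, mulVecLin_apply, add_diagonal_single_mul_mulVec, hx, zero_add] at hx'
    simpa using congrFun hx' i

theorem exists_isUnit_add_diagonal_mul {A C : Matrix m m R} (hAC : Aᵀ * C = Cᵀ * A)
    (hker : ∀ x, A *ᵥ x = 0 → C *ᵥ x = 0 → x = 0) :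
    ∃ d : m → R, IsUnit (A + diagonal d * C) := by
  induction h : finrank R (LinearMap.ker A.mulVecLin) using Nat.strong_induction_on
    generalizing A with
  | _ k ih =>
  by_cases hA : LinearMap.ker A.mulVecLin = ⊥
  · refine ⟨0, ?_⟩
    rw [diagonal_zero', zero_mul, add_zero, ← mulVec_injective_iff_isUnit, ← coe_mulVecLin]
    exact LinearMap.ker_eq_bot.mp hA
  obtain ⟨x, hAx, hx⟩ := (Submodule.ne_bot_iff _).mp hA
  obtain ⟨i, hi⟩ : ∃ i, (C *ᵥ x) i ≠ 0 := Function.ne_iff.mp (mt (hker x hAx) hx)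
  have hker' : ∀ y, (A + diagonal (Pi.single i 1) * C) *ᵥ y = 0 → C *ᵥ y = 0 → y = 0 :=
    fun y hy hCy ↦ hker y (by simpa [add_diagonal_single_mul_mulVec, hCy] using hy) hCy
  have hlt := Submodule.finrank_lt_finrank_of_lt
    (ker_mulVecLin_add_diagonal_single_mul_lt hAC hAx hi)
  obtain ⟨d, hd⟩ := ih _ (h ▸ hlt) (transpose_mul_add_diagonal_mul_comm hAC _) hker' rfl
  refine ⟨Pi.single i 1 + d, ?_⟩
  rwa [show diagonal (Pi.single i 1 + d) = diagonal (Pi.single i 1) + diagonal d from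
    (diagonal_add _ _).symm, add_mul, ← add_assoc]

end DiagonalCorrection

section Symplectic

variable {n R : Type*} [Fintype n] [DecidableEq n] [CommRing R]

lemma fromBlocks_zero_one_one_zero_mul_self :
    (fromBlocks 0 1 1 0 : Matrix (n ⊕ n) (n ⊕ n) R) * fromBlocks 0 1 1 0 = 1 := by
  simp [fromBlocks_multiply, fromBlocks_one]

lemma toBlocks₁₁_transpose_mul_fromBlocks_zero_one_one_zero_mul (χ : Matrix (n ⊕ n) (n ⊕ n) R) :
    (χᵀ * fromBlocks 0 1 1 0 * χ).toBlocks₁₁ =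
      χ.toBlocks₂₁ᵀ * χ.toBlocks₁₁ + χ.toBlocks₁₁ᵀ * χ.toBlocks₂₁ := by
  conv_lhs => rw [← fromBlocks_toBlocks χ]
  simp [fromBlocks_transpose, fromBlocks_multiply]

lemma isUnit_of_transpose_mul_fromBlocks_zero_one_one_zero_mul_eq {χ : Matrix (n ⊕ n) (n ⊕ n) R}
    (hχ : χᵀ * fromBlocks 0 1 1 0 * χ = fromBlocks 0 1 1 0) : IsUnit χ := by
  refine .of_mul_eq_one_right (fromBlocks 0 1 1 0 * χᵀ * fromBlocks 0 1 1 0) ?_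
  rw [mul_assoc, mul_assoc, ← mul_assoc χᵀ, hχ, fromBlocks_zero_one_one_zero_mul_self]

lemma transpose_toBlocks₁₁_mul_toBlocks₂₁_comm [CharP R 2] {χ : Matrix (n ⊕ n) (n ⊕ n) R}
    (hχ : χᵀ * fromBlocks 0 1 1 0 * χ = fromBlocks 0 1 1 0) :
    χ.toBlocks₁₁ᵀ * χ.toBlocks₂₁ = χ.toBlocks₂₁ᵀ * χ.toBlocks₁₁ := by
  have h := toBlocks₁₁_transpose_mul_fromBlocks_zero_one_one_zero_mul χ
  rw [hχ, toBlocks_fromBlocks₁₁, eq_comm, add_eq_zero_iff_eq_neg] at h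
  ext i j
  simpa [CharTwo.neg_eq] using (congrFun (congrFun h i) j).symm

end Symplectic

lemma eq_zero_of_toBlocks₁₁_mulVec_eq_zero {m n R : Type*} [Fintype m] [Fintype n]
    [DecidableEq m] [DecidableEq n] [CommRing R] {χ : Matrix (m ⊕ n) (m ⊕ n) R} (hχ : IsUnit χ)
    {x : m → R} (h₁ : χ.toBlocks₁₁ *ᵥ x = 0) (h₂ : χ.toBlocks₂₁ *ᵥ x = 0) : x = 0 := by
  have h : χ *ᵥ Sum.elim x 0 = 0 := by
    rw [← fromBlocks_toBlocks χ, fromBlocks_mulVec]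
    simp [h₁, h₂]
  funext i
  simpa using congrFun (mulVec_injective_of_isUnit hχ (h.trans (mulVec_zero χ).symm)) (.inl i)

lemma toBlocks₁₁_fromBlocks_one_zero_one_mul {m n R : Type*} [Fintype m] [Fintype n]
    [DecidableEq m] [DecidableEq n] [Semiring R] (K : Matrix m n R) (χ : Matrix (m ⊕ n) (m ⊕ n) R) :
    (fromBlocks 1 K 0 1 * χ).toBlocks₁₁ = χ.toBlocks₁₁ + K * χ.toBlocks₂₁ := by
  conv_lhs => rw [← fromBlocks_toBlocks χ]
  simp [fromBlocks_multiply]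

/-- For every symplectic matrix `χ` over `𝔽₂` there is a symmetric (indeed diagonal) matrix `K`
such that `[[I,K],[0,I]] · χ` has invertible top-left block. -/
theorem stmt_12 (n : ℕ) (χ : Matrix (Fin n ⊕ Fin n) (Fin n ⊕ Fin n) (ZMod 2))
    (hsymp : χᵀ * Matrix.fromBlocks 0 1 1 0 * χ = Matrix.fromBlocks 0 1 1 0) :
    ∃ K : Matrix (Fin n) (Fin n) (ZMod 2), K.IsSymm ∧ K.IsDiag ∧
      IsUnit ((Matrix.fromBlocks 1 K 0 1 * χ).toBlocks₁₁) := by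
  have hχ := isUnit_of_transpose_mul_fromBlocks_zero_one_one_zero_mul_eq hsymp
  obtain ⟨d, hd⟩ := exists_isUnit_add_diagonal_mul
    (transpose_toBlocks₁₁_mul_toBlocks₂₁_comm hsymp)
    (fun x h₁ h₂ ↦ eq_zero_of_toBlocks₁₁_mulVec_eq_zero hχ h₁ h₂)
  refine ⟨diagonal d, (isDiag_diagonal d).isSymm, isDiag_diagonal d, ?_⟩
  rwa [toBlocks₁₁_fromBlocks_one_zero_one_mul]
end

section
/- Every symmetric r² × r² matrix S over F₂ can be written as a sum S = Σ_{i=1}^{a} (M_i ⊗ M_iᵀ) τ with M_i ∈ M_r(2) and a ≤ r² + 1, where τ is the tensor-swap permutation matrix on F₂^{r²}. -/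
open Matrix Kronecker

def tau (r : ℕ) : Matrix (Fin r × Fin r) (Fin r × Fin r) (ZMod 2) :=
  fun p q => if p.1 = q.2 ∧ p.2 = q.1 then 1 else 0

/-!
Reindexing `S` by `R (i, j) (k, l) = S (i, l) (k, j)` turns the claim into a binary Cholesky
decomposition: a symmetric `n × n` matrix over `𝔽₂` is a sum of at most `n + 1` matrices `v vᵀ`.
Over `𝔽₂` the quadratic form of a symmetric `S` is linear, `xᵀ S x = diag S ⬝ x`. If `diag S ≠ 0`,
pick `x` with `xᵀ S x = 1`; then `S - (S x)(S x)ᵀ` has smaller rank and diagonal `diag S + S x`, and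
`x` can be chosen with `S x ≠ diag S` unless `S = diag S (diag S)ᵀ`. So `S` is a sum of `rank S`
squares. If `diag S = 0`, subtracting `e_i e_iᵀ` first costs one extra square.
-/

namespace Matrix

section RankReduction

variable {m n K : Type*} [Fintype n] [Field K]

/-- Wedderburn's rank-one reduction. -/
theorem rank_sub_vecMulVec_lt [Fintype m] (S : Matrix m n K) (x : n → K) (y : m → K)
    (h : y ⬝ᵥ S *ᵥ x = 1) : (S - vecMulVec (S *ᵥ x) (y ᵥ* S)).rank < S.rank := by
  set T := S - vecMulVec (S *ᵥ x) (y ᵥ* S)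
  have hT : ∀ z, T *ᵥ z = S *ᵥ (z - ((y ᵥ* S) ⬝ᵥ z) • x) := by
    intro z
    simp [T, sub_mulVec, mulVec_sub, mulVec_smul, vecMulVec_mulVec]
  have hle : LinearMap.range T.mulVecLin ≤ LinearMap.range S.mulVecLin := by
    rintro _ ⟨z, rfl⟩
    exact ⟨_, (hT z).symm⟩
  have hy : ∀ z, y ⬝ᵥ T *ᵥ z = 0 := by
    intro z
    rw [hT, mulVec_sub, mulVec_smul, dotProduct_sub, dotProduct_smul, h, dotProduct_mulVec,
      smul_eq_mul, mul_one, sub_self]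
  have hSx : S *ᵥ x ∉ LinearMap.range T.mulVecLin := by
    rintro ⟨z, hz⟩
    rw [← hz, mulVecLin_apply, hy] at h
    exact zero_ne_one h
  exact Submodule.finrank_lt_finrank_of_lt
    (lt_of_le_of_ne hle fun heq => hSx (heq ▸ ⟨x, rfl⟩))

theorem exists_dotProduct_eq_one {d : n → K} (hd : d ≠ 0) : ∃ u, d ⬝ᵥ u = 1 := by
  classical
  obtain ⟨i, hi⟩ := Function.ne_iff.1 hd
  exact ⟨Pi.single i (d i)⁻¹, by rw [dotProduct_single, mul_inv_cancel₀ hi]⟩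

theorem eq_vecMulVec_of_forall_dotProduct_eq_one [DecidableEq n] {S : Matrix m n K}
    {w : m → K} {d : n → K} (hd : d ≠ 0) (h : ∀ x, d ⬝ᵥ x = 1 → S *ᵥ x = w) :
    S = vecMulVec w d := by
  obtain ⟨u, hu⟩ := exists_dotProduct_eq_one hd
  have hx : ∀ x, S *ᵥ x = (d ⬝ᵥ x) • w := by
    intro x
    have hxu := h (x + (1 - d ⬝ᵥ x) • u) (by rw [dotProduct_add, dotProduct_smul, hu]; simp)
    rw [mulVec_add, mulVec_smul, h u hu] at hxu
    rw [eq_sub_of_add_eq hxu, sub_smul, one_smul, sub_sub_cancel]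
  ext k j
  simpa [mulVec_single_one, vecMulVec_apply, mul_comm] using congr_fun (hx (Pi.single j 1)) k

end RankReduction

theorem exists_sum_vecMulVec_self_of_sub {ι R : Type*} [NonUnitalNonAssocRing R]
    {S : Matrix ι ι R} {v : ι → R} {a : ℕ}
    (h : ∃ w : Fin a → ι → R, S - vecMulVec v v = ∑ k, vecMulVec (w k) (w k)) :
    ∃ w : Fin (a + 1) → ι → R, S = ∑ k, vecMulVec (w k) (w k) := by
  obtain ⟨w, hw⟩ := h
  exact ⟨Fin.cons v w, by simp [Fin.sum_univ_succ, ← hw]⟩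

section Binary

variable {ι : Type*} [Fintype ι] [DecidableEq ι] {S : Matrix ι ι (ZMod 2)}

/-- Over `𝔽₂` the off-diagonal terms of a symmetric quadratic form cancel in pairs. -/
theorem IsSymm.dotProduct_mulVec_self (hS : S.IsSymm) (x : ι → ZMod 2) :
    x ⬝ᵥ S *ᵥ x = S.diag ⬝ᵥ x := by
  have hoff : ∑ p ∈ Finset.univ.offDiag, x p.1 * (S p.1 p.2 * x p.2) = 0 := by
    refine Finset.sum_involution (fun p _ => p.swap) (fun p _ => ?_)
      (fun p hp _ h => (Finset.mem_offDiag.1 hp).2.2 (congrArg Prod.snd h))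
      (fun p hp => by simpa [eq_comm] using hp) (fun p _ => p.swap_swap)
    have : x p.2 * (S p.2 p.1 * x p.1) = x p.1 * (S p.1 p.2 * x p.2) := by
      rw [hS.apply]; ring
    exact this ▸ CharTwo.add_self_eq_zero _
  simp only [dotProduct, mulVec, Finset.mul_sum]
  rw [← Finset.sum_product', ← Finset.diag_union_offDiag,
    Finset.sum_union (Finset.disjoint_diag_offDiag _), Finset.sum_diag, hoff, add_zero]
  refine Finset.sum_congr rfl fun i _ => ?_
  rw [mul_left_comm, ← sq, ZMod.pow_card, diag_apply]

theorem IsSymm.exists_sum_vecMulVec_self_of_diag_ne_zero (hS : S.IsSymm) (hd : S.diag ≠ 0) :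
    ∃ a ≤ S.rank, ∃ v : Fin a → ι → ZMod 2, S = ∑ k, vecMulVec (v k) (v k) := by
  induction hr : S.rank using Nat.strong_induction_on generalizing S with
  | _ ρ ih =>
  have hpivot : ∀ x, S.diag ⬝ᵥ x = 1 → (S - vecMulVec (S *ᵥ x) (S *ᵥ x)).rank < ρ := by
    intro x hx
    rw [← hS.dotProduct_mulVec_self] at hx
    simpa [hr, ← mulVec_transpose, hS.eq] using rank_sub_vecMulVec_lt S x x hx
  by_cases hx : ∃ x, S.diag ⬝ᵥ x = 1 ∧ S *ᵥ x ≠ S.diag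
  · obtain ⟨x, hx1, hxd⟩ := hx
    have hT : (S - vecMulVec (S *ᵥ x) (S *ᵥ x)).IsSymm := hS.sub (transpose_vecMulVec _ _)
    have hTd : (S - vecMulVec (S *ᵥ x) (S *ᵥ x)).diag ≠ 0 := by
      refine fun h => hxd (funext fun k => ?_)
      have hk := congr_fun h k
      rw [diag_apply, sub_apply, vecMulVec_apply, ← sq, ZMod.pow_card, Pi.zero_apply,
        sub_eq_zero] at hk
      exact hk.symm
    obtain ⟨a, ha, hw⟩ := ih _ (hpivot x hx1) hT hTd rfl
    exact ⟨a + 1, Nat.succ_le_of_lt (ha.trans_lt (hpivot x hx1)),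
      exists_sum_vecMulVec_self_of_sub hw⟩
  · push Not at hx
    obtain ⟨u, hu⟩ := exists_dotProduct_eq_one hd
    refine ⟨1, Nat.zero_lt_of_lt (hpivot u hu), fun _ => S.diag, ?_⟩
    simpa using eq_vecMulVec_of_forall_dotProduct_eq_one hd hx

theorem IsSymm.exists_sum_vecMulVec_self (hS : S.IsSymm) :
    ∃ a ≤ Fintype.card ι + 1, ∃ v : Fin a → ι → ZMod 2, S = ∑ k, vecMulVec (v k) (v k) := by
  by_cases hd : S.diag = 0
  · rcases isEmpty_or_nonempty ι with hι | ⟨⟨i⟩⟩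
    · exact ⟨0, Nat.zero_le _, finZeroElim, Subsingleton.elim _ _⟩
    set e : ι → ZMod 2 := Pi.single i 1
    have hT : (S - vecMulVec e e).IsSymm := hS.sub (transpose_vecMulVec e e)
    have hTd : (S - vecMulVec e e).diag ≠ 0 :=
      fun h => by simpa [e, vecMulVec_apply, show S i i = 0 from congr_fun hd i]
        using congr_fun h i
    obtain ⟨a, ha, hw⟩ := hT.exists_sum_vecMulVec_self_of_diag_ne_zero hTd
    exact ⟨a + 1, by grw [ha, rank_le_card_width], exists_sum_vecMulVec_self_of_sub hw⟩
  · obtain ⟨a, ha, hv⟩ := hS.exists_sum_vecMulVec_self_of_diag_ne_zero hd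
    exact ⟨a, by grw [ha, rank_le_card_width]; omega, hv⟩

end Binary

end Matrix

theorem kronecker_mul_tau_apply {r : ℕ} (A B : Matrix (Fin r) (Fin r) (ZMod 2))
    (p q : Fin r × Fin r) : ((A ⊗ₖ B) * tau r) p q = A p.1 q.2 * B p.2 q.1 := by
  rw [mul_apply, Finset.sum_eq_single (q.2, q.1)]
  · simp [tau]
  · rintro s - hs
    have : ¬(s.1 = q.2 ∧ s.2 = q.1) := fun h => hs (Prod.ext h.1 h.2)
    simp [tau, this]
  · simp

/-- Every symmetric `r² × r²` binary matrix is a sum of at most `r² + 1` terms of the form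
`(M ⊗ Mᵀ) τ`. -/
theorem stmt_17 (r : ℕ) (S : Matrix (Fin r × Fin r) (Fin r × Fin r) (ZMod 2))
    (hS : S.IsSymm) :
    ∃ a : ℕ, a ≤ r ^ 2 + 1 ∧ ∃ M : Fin a → Matrix (Fin r) (Fin r) (ZMod 2),
      S = ∑ i : Fin a, (M i ⊗ₖ (M i)ᵀ) * tau r := by
  let R : Matrix (Fin r × Fin r) (Fin r × Fin r) (ZMod 2) :=
    of fun x y => S (x.1, y.2) (y.1, x.2)
  have hR : R.IsSymm := by ext x y; exact hS.apply _ _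
  obtain ⟨a, ha, v, hv⟩ := hR.exists_sum_vecMulVec_self
  refine ⟨a, by simpa [sq] using ha, fun k => of fun i j => v k (i, j), ?_⟩
  ext p q
  simpa [R, Matrix.sum_apply, kronecker_mul_tau_apply, vecMulVec_apply]
    using congr_fun₂ hv (p.1, q.2) (q.1, p.2)
end

section
/- Every symmetric matrix S over F₂ admits a decomposition S = L Lᵀ, where L is a binary matrix with at most rank(S) + 1 columns; moreover if S has a nonzero diagonal entry then L can be taken with exactly rank(S) columns. -/
/-!
If `S i i = 1` and `v` is the `i`-th column, `S - v vᵀ` is symmetric of rank one less (Wedderburn's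
rank-one reduction), so we recurse and append `v` as a column of `L`. When the remaining matrix
has zero diagonal, adding `v vᵀ` for a nonzero column `v = S eᵢ` keeps the column space (as
`vᵢ = S i i = 0`) and creates a nonzero diagonal entry, at the price of one extra column. That
decomposition also comes with `c` such that `L c = 0` and `c ⬝ c = 1`, and in the pivot case
`(L + v cᵀ)(L + v cᵀ)ᵀ = L Lᵀ + v vᵀ` absorbs the extra column again.
-/

open Matrix

namespace Matrix

variable {l m n R : Type*}

theorem rank_add_vecMulVec_mulVec [Fintype n] [DecidableEq n] [CommRing R] (A : Matrix m n R)
    {z w : n → R} (h : IsUnit (1 + w ⬝ᵥ z)) :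
    (A + vecMulVec (A *ᵥ z) w).rank = A.rank := by
  have hfactor : A + vecMulVec (A *ᵥ z) w = A * (1 + vecMulVec z w) := by
    rw [Matrix.mul_add, Matrix.mul_one, mul_vecMulVec]
  rw [hfactor, rank_mul_eq_left_of_isUnit_det]
  rwa [vecMulVec_eq Unit, det_one_add_replicateCol_mul_replicateRow]

theorem rank_sub_vecMulVec_add_one [Fintype m] [Fintype n] {K : Type*} [Field K]
    (A : Matrix m n K) {x : n → K} {y : m → K} (h : y ⬝ᵥ A *ᵥ x = 1) :
    (A - vecMulVec (A *ᵥ x) (y ᵥ* A)).rank + 1 = A.rank := by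
  set B := A - vecMulVec (A *ᵥ x) (y ᵥ* A)
  have hB (z : n → K) : B *ᵥ z = A *ᵥ z - (y ⬝ᵥ A *ᵥ z) • A *ᵥ x := by
    rw [sub_mulVec, vecMulVec_mulVec, op_smul_eq_smul, ← dotProduct_mulVec]
  have hAx : A *ᵥ x ∉ LinearMap.range B.mulVecLin := by
    rintro ⟨z, hz⟩
    have hyB : y ⬝ᵥ B *ᵥ z = 0 := by
      rw [hB, dotProduct_sub, dotProduct_smul, h, smul_eq_mul, mul_one, sub_self]
    rw [mulVecLin_apply] at hz
    rw [hz, h] at hyB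
    exact one_ne_zero hyB
  have hrange : LinearMap.range A.mulVecLin
      = LinearMap.range B.mulVecLin ⊔ Submodule.span K {A *ᵥ x} := by
    apply le_antisymm
    · rintro _ ⟨z, rfl⟩
      refine Submodule.mem_sup.mpr ⟨B *ᵥ z, ⟨z, rfl⟩, (y ⬝ᵥ A *ᵥ z) • A *ᵥ x,
        Submodule.smul_mem _ _ (Submodule.mem_span_singleton_self _), ?_⟩
      rw [hB, sub_add_cancel, mulVecLin_apply]
    · refine sup_le ?_ ?_
      · rintro _ ⟨z, rfl⟩
        exact ⟨z - (y ⬝ᵥ A *ᵥ z) • x, by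
          rw [mulVecLin_apply, mulVecLin_apply, hB, mulVec_sub, mulVec_smul]⟩
      · rw [Submodule.span_singleton_le_iff_mem]
        exact ⟨x, rfl⟩
  rw [rank, rank, hrange, Submodule.finrank_sup_span_singleton hAx]

theorem add_vecMulVec_mul_transpose_add_vecMulVec [Fintype n] [CommSemiring R]
    (A : Matrix l n R) (u : l → R) {c : n → R} (hAc : A *ᵥ c = 0) (hc : c ⬝ᵥ c = 1) :
    (A + vecMulVec u c) * (A + vecMulVec u c)ᵀ = A * Aᵀ + vecMulVec u u := by
  rw [transpose_add, transpose_vecMulVec, Matrix.add_mul, Matrix.mul_add, Matrix.mul_add,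
    mul_vecMulVec, vecMulVec_mul, vecMulVec_mul_vecMulVec, vecMul_transpose, hAc, hc, one_smul,
    zero_vecMulVec, vecMulVec_zero, add_zero, zero_add]

def consCol {a : ℕ} (v : m → R) (M : Matrix m (Fin a) R) : Matrix m (Fin (a + 1)) R :=
  of fun i => vecCons (v i) (M i)

theorem consCol_mul_transpose {a : ℕ} [CommSemiring R] (v : m → R) (M : Matrix m (Fin a) R) :
    consCol v M * (consCol v M)ᵀ = vecMulVec v v + M * Mᵀ := by
  ext i j
  exact cons_dotProduct_cons _ _ _ _

theorem consCol_mulVec_cons {a : ℕ} [CommSemiring R] (v : m → R) (M : Matrix m (Fin a) R)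
    (x : R) (c : Fin a → R) :
    consCol v M *ᵥ vecCons x c = x • v + M *ᵥ c := by
  ext i
  simp [consCol, mulVec, mul_comm]

theorem IsSymm.exists_mul_transpose_succ_of_diag_eq_zero [Fintype n] [DecidableEq n]
    [CommRing R] [NoZeroDivisors R] {S : Matrix n n R} (hS : S.IsSymm) (hdiag : ∀ k, S k k = 0)
    (hpivot : ∀ T : Matrix n n R, T.rank = S.rank → T.IsSymm → (∃ j, T j j ≠ 0) →
      ∃ M : Matrix n (Fin S.rank) R, T = M * Mᵀ) :
    ∃ L : Matrix n (Fin (S.rank + 1)) R, S = L * Lᵀ ∧ ∃ c, L *ᵥ c = 0 ∧ c ⬝ᵥ c = 1 := by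
  by_cases hS0 : S = 0
  · exact ⟨0, by simp [hS0], Pi.single 0 1, zero_mulVec _, by simp⟩
  obtain ⟨j, i, hji⟩ : ∃ j i, S j i ≠ 0 := by
    by_contra! h
    exact hS0 (Matrix.ext h)
  set v := S.col i
  set T := S - vecMulVec v v
  have hTS : T.rank = S.rank := by
    have := S.rank_add_vecMulVec_mulVec (z := Pi.single i 1) (w := -v) (by simp [v, hdiag])
    rwa [mulVec_single_one, vecMulVec_neg, ← sub_eq_add_neg] at this
  have hT : T.IsSymm := hS.sub (by rw [IsSymm, transpose_vecMulVec])
  have hTjj : T j j ≠ 0 := by simpa [T, v, vecMulVec_apply, hdiag] using hji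
  obtain ⟨M, hM⟩ := hpivot T hTS hT ⟨j, hTjj⟩
  refine ⟨consCol v M, by rw [consCol_mul_transpose, ← hM, add_sub_cancel],
    vecCons (-1) (M i), ?_, ?_⟩
  · have hMMi : M *ᵥ M i = T *ᵥ Pi.single i 1 := by
      rw [hM, mulVec_single_one]
      rfl
    rw [consCol_mulVec_cons, hMMi]
    ext k
    simp [T, v, vecMulVec_apply, hdiag]
  · have hMi : M i ⬝ᵥ M i = T i i := by
      rw [hM]
      rfl
    rw [cons_dotProduct_cons, hMi]
    simp [T, v, vecMulVec_apply, hdiag]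

theorem IsSymm.exists_mul_transpose_of_diag_ne_zero [Fintype n] [DecidableEq n]
    {S : Matrix n n (ZMod 2)} (hS : S.IsSymm) (hd : ∃ i, S i i ≠ 0) :
    ∃ L : Matrix n (Fin S.rank) (ZMod 2), S = L * Lᵀ := by
  induction hr : S.rank using Nat.strong_induction_on generalizing S with
  | _ r ih =>
  obtain ⟨i, hi⟩ := hd
  set v := S.col i
  set T := S - vecMulVec v v
  have hTr : T.rank + 1 = r := by
    have hii : S i i = 1 := Fin.eq_one_of_ne_zero _ hi
    have := S.rank_sub_vecMulVec_add_one (x := Pi.single i 1) (y := Pi.single i 1)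
      (by simpa [mulVec_single_one] using hii)
    rwa [mulVec_single_one, single_one_vecMul, show S.row i = v from funext fun k => hS.apply k i,
      hr] at this
  have hT : T.IsSymm := hS.sub (by rw [IsSymm, transpose_vecMulVec])
  subst hTr
  by_cases hTd : ∃ j, T j j ≠ 0
  · obtain ⟨M, hM⟩ := ih T.rank (by omega) hT hTd rfl
    exact ⟨consCol v M, by rw [consCol_mul_transpose, ← hM, add_sub_cancel]⟩
  · push Not at hTd
    obtain ⟨L, hL, c, hLc, hc⟩ := hT.exists_mul_transpose_succ_of_diag_eq_zero hTd
      fun U hU hUs hUd => ih _ (by omega) hUs hUd hU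
    exact ⟨L + vecMulVec v c, by
      rw [add_vecMulVec_mul_transpose_add_vecMulVec _ _ hLc hc, ← hL, sub_add_cancel]⟩

end Matrix

/-- Binary Cholesky decomposition (Lempel 1975): every symmetric matrix `S` over `𝔽₂`
equals `L Lᵀ` with `L` having at most `rank S + 1` columns, and exactly `rank S` columns
if `S` has a nonzero diagonal entry. -/
theorem stmt_18 (n : ℕ) (S : Matrix (Fin n) (Fin n) (ZMod 2)) (hS : S.IsSymm) :
    (∃ a : ℕ, a ≤ S.rank + 1 ∧
      ∃ L : Matrix (Fin n) (Fin a) (ZMod 2), S = L * Lᵀ) ∧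
    ((∃ i, S i i ≠ 0) →
      ∃ L : Matrix (Fin n) (Fin S.rank) (ZMod 2), S = L * Lᵀ) := by
  refine ⟨?_, hS.exists_mul_transpose_of_diag_ne_zero⟩
  by_cases hd : ∃ i, S i i ≠ 0
  · obtain ⟨L, hL⟩ := hS.exists_mul_transpose_of_diag_ne_zero hd
    exact ⟨S.rank, by omega, L, hL⟩
  · push Not at hd
    obtain ⟨L, hL, -⟩ := hS.exists_mul_transpose_succ_of_diag_eq_zero hd
      fun T hT hTs hTd => hT ▸ hTs.exists_mul_transpose_of_diag_ne_zero hTd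
    exact ⟨S.rank + 1, le_rfl, L, hL⟩
end
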